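/- Let V be a Γ-graded vector space with commutation factor ε and let 𝓡(V) be the space of quadrilinear maps R : V⁴ → k satisfying R(A,B,C,D) = −ε(A,B)R(B,A,C,D) and R(A,B,C,D) = ε(A+B,C+D)R(C,D,A,B). Define the Bianchi map β : 𝓡(V) → 𝓡(V) by β(R)(A,B,C,D) := R(A,B,C,D) + ε(A,B+C)R(B,C,A,D) + ε(A+B,C)R(C,A,B,D). Then (1/3)β is the projection of 𝓡(V) onto Alt⁴_ε(V) parallel to Ker(β); in particular β(R) is ε-alternating for all R ∈ 𝓡(V), and β(R) = 3R whenever R is ε-alternating. -/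

import Mathlib

/-- A commutation factor of an abelian group `Γ` with values in `k`. -/
structure CommutationFactor (k Γ : Type*) [Field k] [AddCommGroup Γ] where
  ε : Γ → Γ → k
  mul_symm : ∀ a b, ε a b * ε b a = 1
  add_fst : ∀ a b c, ε (a + b) c = ε a c * ε b c
  add_snd : ∀ a b c, ε a (b + c) = ε a b * ε a c

/-- The value of the Bianchi map `β(R)` on homogeneous vectors of degrees
`a`, `b`, `c` (and arbitrary fourth argument). -/
def bianchiVal {k Γ V : Type*} [Field k] [AddCommGroup Γ]
    [AddCommGroup V] [Module k V]
    (ε : Γ → Γ → k) (R : V →ₗ[k] V →ₗ[k] V →ₗ[k] V →ₗ[k] k)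
    (a b c : Γ) (A B C D : V) : k :=
  R A B C D + ε a (b + c) * R B C A D + ε (a + b) c * R C A B D

/-!
`β(R)(A,B,C,D)` is an ε-signed cyclic sum of `R` over its first three arguments, so it is
cyclically invariant for every `R`; this alone gives `β(β(R)) = 3 β(R)`. Antisymmetry of `R` in
its first pair permutes the three terms of `β(R)(B,A,C,D)` into those of `β(R)(A,B,C,D)`, and
with cyclicity `β(R)` is antisymmetric in all of its first three arguments. Pair symmetry and
antisymmetry in the first pair give antisymmetry in the last pair, and these rewrite
`β(R)(A,B,D,C)` term by term into `β(R)(A,B,C,D)`. If `R` is ε-alternating, every term of the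
cyclic sum equals `R(A,B,C,D)`.
-/

namespace CommutationFactor

variable {k Γ : Type*} [Field k] [AddCommGroup Γ] (E : CommutationFactor k Γ)

theorem ε_ne_zero (a b : Γ) : E.ε a b ≠ 0 :=
  left_ne_zero_of_mul_eq_one (E.mul_symm a b)

theorem ε_swap (a b : Γ) : E.ε b a = (E.ε a b)⁻¹ :=
  eq_inv_of_mul_eq_one_right (E.mul_symm a b)

end CommutationFactor

section Bianchi

variable {k Γ V : Type*} [Field k] [AddCommGroup Γ] [AddCommGroup V] [Module k V]
  (E : CommutationFactor k Γ) (𝒱 : Γ → Submodule k V)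
  (R : V →ₗ[k] V →ₗ[k] V →ₗ[k] V →ₗ[k] k)

def AntisymmFirstPair : Prop :=
  ∀ a b c d : Γ, ∀ A ∈ 𝒱 a, ∀ B ∈ 𝒱 b, ∀ C ∈ 𝒱 c, ∀ D ∈ 𝒱 d,
    R A B C D = -(E.ε a b) * R B A C D

def AntisymmMiddlePair : Prop :=
  ∀ a b c d : Γ, ∀ A ∈ 𝒱 a, ∀ B ∈ 𝒱 b, ∀ C ∈ 𝒱 c, ∀ D ∈ 𝒱 d,
    R A B C D = -(E.ε b c) * R A C B D

def AntisymmLastPair : Prop :=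
  ∀ a b c d : Γ, ∀ A ∈ 𝒱 a, ∀ B ∈ 𝒱 b, ∀ C ∈ 𝒱 c, ∀ D ∈ 𝒱 d,
    R A B C D = -(E.ε c d) * R A B D C

def PairSymm : Prop :=
  ∀ a b c d : Γ, ∀ A ∈ 𝒱 a, ∀ B ∈ 𝒱 b, ∀ C ∈ 𝒱 c, ∀ D ∈ 𝒱 d,
    R A B C D = E.ε (a + b) (c + d) * R C D A B

variable {E 𝒱 R}

theorem AntisymmFirstPair.antisymmLastPair (h₁ : AntisymmFirstPair E 𝒱 R)
    (hs : PairSymm E 𝒱 R) : AntisymmLastPair E 𝒱 R := by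
  intro a b c d A hA B hB C hC D hD
  rw [hs a b c d A hA B hB C hC D hD, h₁ c d a b C hC D hD A hA B hB,
    hs d c a b D hD C hC A hA B hB]
  simp only [E.add_fst, E.add_snd, E.ε_swap a c, E.ε_swap a d, E.ε_swap b c, E.ε_swap b d]
  field_simp [E.ε_ne_zero]

variable (E R)

theorem bianchiVal_cycle (a b c : Γ) (A B C D : V) :
    E.ε a (b + c) * bianchiVal E.ε R b c a B C A D = bianchiVal E.ε R a b c A B C D := by
  simp only [bianchiVal, E.add_fst, E.add_snd, E.ε_swap a b, E.ε_swap a c]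
  field_simp [E.ε_ne_zero]
  ring

theorem bianchiVal_cycle_symm (a b c : Γ) (A B C D : V) :
    E.ε (a + b) c * bianchiVal E.ε R c a b C A B D = bianchiVal E.ε R a b c A B C D := by
  rw [← bianchiVal_cycle E R c a b, ← mul_assoc, E.mul_symm, one_mul]

theorem bianchiVal_cyclic_sum (a b c : Γ) (A B C D : V) :
    bianchiVal E.ε R a b c A B C D
        + E.ε a (b + c) * bianchiVal E.ε R b c a B C A D
        + E.ε (a + b) c * bianchiVal E.ε R c a b C A B D
      = 3 * bianchiVal E.ε R a b c A B C D := by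
  rw [bianchiVal_cycle, bianchiVal_cycle_symm]
  ring

variable {E R}

theorem bianchiVal_antisymm_first (h₁ : AntisymmFirstPair E 𝒱 R) {a b c d : Γ} {A B C D : V}
    (hA : A ∈ 𝒱 a) (hB : B ∈ 𝒱 b) (hC : C ∈ 𝒱 c) (hD : D ∈ 𝒱 d) :
    bianchiVal E.ε R a b c A B C D = -(E.ε a b) * bianchiVal E.ε R b a c B A C D := by
  simp only [bianchiVal]
  rw [h₁ b a c d B hB A hA C hC D hD, h₁ a c b d A hA C hC B hB D hD,
    h₁ c b a d C hC B hB A hA D hD]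
  simp only [E.add_fst, E.add_snd, E.ε_swap a b, E.ε_swap b c]
  field_simp [E.ε_ne_zero]
  ring

theorem bianchiVal_antisymm_middle (h₁ : AntisymmFirstPair E 𝒱 R) {a b c d : Γ} {A B C D : V}
    (hA : A ∈ 𝒱 a) (hB : B ∈ 𝒱 b) (hC : C ∈ 𝒱 c) (hD : D ∈ 𝒱 d) :
    bianchiVal E.ε R a b c A B C D = -(E.ε b c) * bianchiVal E.ε R a c b A C B D := by
  rw [← bianchiVal_cycle E R a b c, ← bianchiVal_cycle E R a c b,
    bianchiVal_antisymm_first h₁ hB hC hA hD, add_comm c b]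
  ring

theorem bianchiVal_antisymm_last (h₁ : AntisymmFirstPair E 𝒱 R) (hs : PairSymm E 𝒱 R)
    {a b c d : Γ} {A B C D : V}
    (hA : A ∈ 𝒱 a) (hB : B ∈ 𝒱 b) (hC : C ∈ 𝒱 c) (hD : D ∈ 𝒱 d) :
    bianchiVal E.ε R a b c A B C D = -(E.ε c d) * bianchiVal E.ε R a b d A B D C := by
  have h₃ := h₁.antisymmLastPair hs
  simp only [bianchiVal]
  rw [h₃ a b d c A hA B hB D hD C hC, hs b d a c B hB D hD A hA C hC,
    h₁ a c b d A hA C hC B hB D hD, hs d a b c D hD A hA B hB C hC,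
    h₃ b c d a B hB C hC D hD A hA]
  simp only [E.add_fst, E.add_snd, E.ε_swap a b, E.ε_swap a d, E.ε_swap b d, E.ε_swap c d]
  field_simp [E.ε_ne_zero]
  ring

theorem bianchiVal_eq_three_mul (h₁ : AntisymmFirstPair E 𝒱 R) (h₂ : AntisymmMiddlePair E 𝒱 R)
    {a b c d : Γ} {A B C D : V}
    (hA : A ∈ 𝒱 a) (hB : B ∈ 𝒱 b) (hC : C ∈ 𝒱 c) (hD : D ∈ 𝒱 d) :
    bianchiVal E.ε R a b c A B C D = 3 * R A B C D := by
  simp only [bianchiVal]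
  rw [h₂ b c a d B hB C hC A hA D hD, h₁ b a c d B hB A hA C hC D hD,
    h₁ c a b d C hC A hA B hB D hD, h₂ a c b d A hA C hC B hB D hD]
  simp only [E.add_fst, E.add_snd, E.ε_swap a b, E.ε_swap a c, E.ε_swap b c]
  field_simp [E.ε_ne_zero]
  ring

end Bianchi

theorem stmt14_general {k Γ V : Type*} [Field k] [AddCommGroup Γ]
    [AddCommGroup V] [Module k V]
    (E : CommutationFactor k Γ)
    (𝒱 : Γ → Submodule k V)
    (R : V →ₗ[k] V →ₗ[k] V →ₗ[k] V →ₗ[k] k)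
    (hR1 : ∀ a b c d : Γ, ∀ A ∈ 𝒱 a, ∀ B ∈ 𝒱 b, ∀ C ∈ 𝒱 c, ∀ D ∈ 𝒱 d,
      R A B C D = -(E.ε a b) * R B A C D)
    (hR2 : ∀ a b c d : Γ, ∀ A ∈ 𝒱 a, ∀ B ∈ 𝒱 b, ∀ C ∈ 𝒱 c, ∀ D ∈ 𝒱 d,
      R A B C D = E.ε (a + b) (c + d) * R C D A B) :
    (∀ a b c d : Γ, ∀ A ∈ 𝒱 a, ∀ B ∈ 𝒱 b, ∀ C ∈ 𝒱 c, ∀ D ∈ 𝒱 d,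
      (bianchiVal E.ε R a b c A B C D
          = -(E.ε a b) * bianchiVal E.ε R b a c B A C D) ∧
      (bianchiVal E.ε R a b c A B C D
          = -(E.ε b c) * bianchiVal E.ε R a c b A C B D) ∧
      (bianchiVal E.ε R a b c A B C D
          = -(E.ε c d) * bianchiVal E.ε R a b d A B D C)) ∧
    (∀ a b c d : Γ, ∀ A ∈ 𝒱 a, ∀ B ∈ 𝒱 b, ∀ C ∈ 𝒱 c, ∀ D ∈ 𝒱 d,
      bianchiVal E.ε R a b c A B C D
        + E.ε a (b + c) * bianchiVal E.ε R b c a B C A D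
        + E.ε (a + b) c * bianchiVal E.ε R c a b C A B D
      = 3 * bianchiVal E.ε R a b c A B C D) ∧
    ((∀ a b c d : Γ, ∀ A ∈ 𝒱 a, ∀ B ∈ 𝒱 b, ∀ C ∈ 𝒱 c, ∀ D ∈ 𝒱 d,
        (R A B C D = -(E.ε a b) * R B A C D) ∧
        (R A B C D = -(E.ε b c) * R A C B D) ∧
        (R A B C D = -(E.ε c d) * R A B D C)) →
      ∀ a b c d : Γ, ∀ A ∈ 𝒱 a, ∀ B ∈ 𝒱 b, ∀ C ∈ 𝒱 c, ∀ D ∈ 𝒱 d,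
        bianchiVal E.ε R a b c A B C D = 3 * R A B C D) := by
  refine ⟨fun a b c d A hA B hB C hC D hD => ?_,
    fun a b c _ A _ B _ C _ D _ => bianchiVal_cyclic_sum E R a b c A B C D, fun hAlt => ?_⟩
  · exact ⟨bianchiVal_antisymm_first hR1 hA hB hC hD, bianchiVal_antisymm_middle hR1 hA hB hC hD,
      bianchiVal_antisymm_last hR1 hR2 hA hB hC hD⟩
  · have h₁ : AntisymmFirstPair E 𝒱 R := fun a b c d A hA B hB C hC D hD =>
      (hAlt a b c d A hA B hB C hC D hD).1
    have h₂ : AntisymmMiddlePair E 𝒱 R := fun a b c d A hA B hB C hC D hD =>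
      (hAlt a b c d A hA B hB C hC D hD).2.1
    exact fun a b c d A hA B hB C hC D hD => bianchiVal_eq_three_mul h₁ h₂ hA hB hC hD

/-- `(1/3)β` is the projection of `𝓡(V)` onto `Alt⁴_ε(V)` parallel to
`Ker β`: `β(R)` is ε-alternating, `β(β(R)) = 3 β(R)`, and `β(R) = 3R`
whenever `R` is ε-alternating. -/
theorem stmt14 {k Γ V : Type*} [Field k] [AddCommGroup Γ] [DecidableEq Γ]
    [AddCommGroup V] [Module k V]
    (h2 : (2 : k) ≠ 0) (h3 : (3 : k) ≠ 0)
    (E : CommutationFactor k Γ)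
    (𝒱 : Γ → Submodule k V) [DirectSum.Decomposition 𝒱]
    (R : V →ₗ[k] V →ₗ[k] V →ₗ[k] V →ₗ[k] k)
    (hR1 : ∀ a b c d : Γ, ∀ A ∈ 𝒱 a, ∀ B ∈ 𝒱 b, ∀ C ∈ 𝒱 c, ∀ D ∈ 𝒱 d,
      R A B C D = -(E.ε a b) * R B A C D)
    (hR2 : ∀ a b c d : Γ, ∀ A ∈ 𝒱 a, ∀ B ∈ 𝒱 b, ∀ C ∈ 𝒱 c, ∀ D ∈ 𝒱 d,
      R A B C D = E.ε (a + b) (c + d) * R C D A B) :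
    (∀ a b c d : Γ, ∀ A ∈ 𝒱 a, ∀ B ∈ 𝒱 b, ∀ C ∈ 𝒱 c, ∀ D ∈ 𝒱 d,
      (bianchiVal E.ε R a b c A B C D
          = -(E.ε a b) * bianchiVal E.ε R b a c B A C D) ∧
      (bianchiVal E.ε R a b c A B C D
          = -(E.ε b c) * bianchiVal E.ε R a c b A C B D) ∧
      (bianchiVal E.ε R a b c A B C D
          = -(E.ε c d) * bianchiVal E.ε R a b d A B D C)) ∧
    (∀ a b c d : Γ, ∀ A ∈ 𝒱 a, ∀ B ∈ 𝒱 b, ∀ C ∈ 𝒱 c, ∀ D ∈ 𝒱 d,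
      bianchiVal E.ε R a b c A B C D
        + E.ε a (b + c) * bianchiVal E.ε R b c a B C A D
        + E.ε (a + b) c * bianchiVal E.ε R c a b C A B D
      = 3 * bianchiVal E.ε R a b c A B C D) ∧
    ((∀ a b c d : Γ, ∀ A ∈ 𝒱 a, ∀ B ∈ 𝒱 b, ∀ C ∈ 𝒱 c, ∀ D ∈ 𝒱 d,
        (R A B C D = -(E.ε a b) * R B A C D) ∧
        (R A B C D = -(E.ε b c) * R A C B D) ∧
        (R A B C D = -(E.ε c d) * R A B D C)) →
      ∀ a b c d : Γ, ∀ A ∈ 𝒱 a, ∀ B ∈ 𝒱 b, ∀ C ∈ 𝒱 c, ∀ D ∈ 𝒱 d,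
        bianchiVal E.ε R a b c A B C D = 3 * R A B C D) :=
  stmt14_general E 𝒱 R hR1 hR2
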